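/- Let G₁ be a connected simple bipartite graph with an even number of edges admitting a cordial labeling f, and let G₂ be a simple graph with a cordial labeling g. Then the labeling h(u,v) = f(u) + g(v) mod 2 of the tensor product G₁ × G₂ is a cordial labeling: h is friendly and the numbers of 0-labeled and 1-labeled edges of G₁ × G₂ differ by at most 1 (in fact are equal). -/

import Mathlib

open Finset

/-- The tensor (categorical) product of two simple graphs. -/
def tensorProd {α β : Type*} (G : SimpleGraph α) (H : SimpleGraph β) :
    SimpleGraph (α × β) where
  Adj x y := G.Adj x.1 y.1 ∧ H.Adj x.2 y.2
  symm := ⟨fun _ _ h => ⟨h.1.symm, h.2.symm⟩⟩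
  loopless := ⟨fun x h => G.loopless.irrefl x.1 h.1⟩

instance {α β : Type*} (G : SimpleGraph α) (H : SimpleGraph β)
    [DecidableRel G.Adj] [DecidableRel H.Adj] :
    DecidableRel (tensorProd G H).Adj :=
  fun _ _ => inferInstanceAs (Decidable (_ ∧ _))

/-- Number of edges of `G` whose induced label (mod-2 sum of endpoint labels) is `c`. -/
def edgeCount {V : Type*} [Fintype V] [DecidableEq V] (G : SimpleGraph V)
    [DecidableRel G.Adj] (f : V → ZMod 2) (c : ZMod 2) : ℕ :=
  (G.edgeFinset.filter fun e =>
    Sym2.lift ⟨fun a b => f a + f b, fun _ _ => add_comm _ _⟩ e = c).card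

/-- A labeling is friendly if the vertex label counts differ by at most 1. -/
def Friendly {V : Type*} [Fintype V] (f : V → ZMod 2) : Prop :=
  |((Finset.univ.filter fun v => f v = 0).card : ℤ)
    - ((Finset.univ.filter fun v => f v = 1).card : ℤ)| ≤ 1

/-- A cordial labeling: friendly with roughly equal edge label counts. -/
def Cordial {V : Type*} [Fintype V] [DecidableEq V] (G : SimpleGraph V)
    [DecidableRel G.Adj] (f : V → ZMod 2) : Prop :=
  Friendly f ∧ |(edgeCount G f 0 : ℤ) - (edgeCount G f 1 : ℤ)| ≤ 1

/-! With the sign `ε(0) = 1`, `ε(1) = -1`, which turns addition in `ZMod 2` into multiplication,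
both friendliness and the edge condition are bounds on signed sums. Vertex pairs and darts of
`G₁ × G₂` are pairs of vertices and of darts, so the signed vertex sum and the signed dart sum of
the labeling `f(u) + g(v)` factor as products of those of `f` and `g`. The signed vertex sums of `f`
and `g` are at most 1 in absolute value; the signed edge sum of `f` vanishes because `G₁` has an
even number of edges, hence so does that of the product labeling. -/

def zmodTwoSign (a : ZMod 2) : ℤ := if a = 0 then 1 else -1

lemma zmodTwoSign_add (a b : ZMod 2) :
    zmodTwoSign (a + b) = zmodTwoSign a * zmodTwoSign b := by
  revert a b; decide

lemma zmodTwo_eq_one_iff_ne_zero (a : ZMod 2) : a = 1 ↔ a ≠ 0 := by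
  revert a; decide

section Counting

variable {α : Type*} (s : Finset α) (φ : α → ZMod 2)

lemma card_filter_eq_zero_add_card_filter_eq_one :
    #{x ∈ s | φ x = 0} + #{x ∈ s | φ x = 1} = #s := by
  simp only [zmodTwo_eq_one_iff_ne_zero]
  exact card_filter_add_card_filter_not _

lemma sum_zmodTwoSign :
    ∑ x ∈ s, zmodTwoSign (φ x) = (#{x ∈ s | φ x = 0} : ℤ) - #{x ∈ s | φ x = 1} := by
  simp only [zmodTwoSign, sum_ite, sum_const, zmodTwo_eq_one_iff_ne_zero]
  simp [sub_eq_add_neg]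

end Counting

lemma friendly_iff_abs_sum_zmodTwoSign_le_one {V : Type*} [Fintype V] (f : V → ZMod 2) :
    Friendly f ↔ |∑ v, zmodTwoSign (f v)| ≤ 1 := by
  rw [Friendly, sum_zmodTwoSign]

lemma Friendly.add_prod {α β : Type*} [Fintype α] [Fintype β] {f : α → ZMod 2} {g : β → ZMod 2}
    (hf : Friendly f) (hg : Friendly g) : Friendly fun p : α × β => f p.1 + g p.2 := by
  rw [friendly_iff_abs_sum_zmodTwoSign_le_one] at *
  simp only [zmodTwoSign_add, Fintype.sum_prod_type, ← sum_mul_sum, abs_mul]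
  exact mul_le_one₀ hf (abs_nonneg _) hg

namespace SimpleGraph

variable {V : Type*} [Fintype V] [DecidableEq V] (G : SimpleGraph V) [DecidableRel G.Adj]

lemma sum_darts_eq_two_mul_sum_edgeFinset {M : Type*} [AddCommMonoid M] (φ : Sym2 V → M) :
    ∑ d : G.Dart, φ d.edge = 2 • ∑ e ∈ G.edgeFinset, φ e := by
  rw [← sum_fiberwise_of_maps_to' (t := G.edgeFinset) fun d _ => mem_edgeFinset.2 d.edge_mem,
    smul_sum]
  refine sum_congr rfl fun e he => ?_
  rw [sum_const, G.dart_edge_fiber_card e (mem_edgeFinset.1 he)]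

lemma edgeCount_zero_add_edgeCount_one (f : V → ZMod 2) :
    edgeCount G f 0 + edgeCount G f 1 = #G.edgeFinset :=
  card_filter_eq_zero_add_card_filter_eq_one _ _

lemma two_mul_edgeCount_sub_edgeCount (f : V → ZMod 2) :
    2 * ((edgeCount G f 0 : ℤ) - edgeCount G f 1)
      = ∑ d : G.Dart, zmodTwoSign (f d.fst + f d.snd) := by
  rw [edgeCount, edgeCount, ← sum_zmodTwoSign, two_mul, ← two_nsmul]
  exact (G.sum_darts_eq_two_mul_sum_edgeFinset _).symm

end SimpleGraph

lemma Cordial.edgeCount_eq_of_even {V : Type*} [Fintype V] [DecidableEq V] {G : SimpleGraph V}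
    [DecidableRel G.Adj] {f : V → ZMod 2} (hf : Cordial G f)
    (heven : Even #G.edgeFinset) : edgeCount G f 0 = edgeCount G f 1 := by
  have hsum := G.edgeCount_zero_add_edgeCount_one f
  have hdiff := abs_le.1 hf.2
  obtain ⟨k, hk⟩ := heven
  omega

def tensorProdDartEquiv {α β : Type*} (G : SimpleGraph α) (H : SimpleGraph β) :
    (tensorProd G H).Dart ≃ G.Dart × H.Dart where
  toFun d := (⟨(d.fst.1, d.snd.1), d.adj.1⟩, ⟨(d.fst.2, d.snd.2), d.adj.2⟩)
  invFun d := ⟨((d.1.fst, d.2.fst), (d.1.snd, d.2.snd)), d.1.adj, d.2.adj⟩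
  left_inv _ := rfl
  right_inv _ := rfl

section TensorProd

variable {V₁ V₂ : Type*} [Fintype V₁] [Fintype V₂]
  (G₁ : SimpleGraph V₁) (G₂ : SimpleGraph V₂) [DecidableRel G₁.Adj] [DecidableRel G₂.Adj]
  (f : V₁ → ZMod 2) (g : V₂ → ZMod 2)

lemma sum_darts_tensorProd_zmodTwoSign :
    ∑ d : (tensorProd G₁ G₂).Dart, zmodTwoSign ((f d.fst.1 + g d.fst.2) + (f d.snd.1 + g d.snd.2))
      = (∑ d : G₁.Dart, zmodTwoSign (f d.fst + f d.snd))
        * ∑ d : G₂.Dart, zmodTwoSign (g d.fst + g d.snd) := by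
  rw [sum_mul_sum, ← Fintype.sum_prod_type']
  refine Fintype.sum_equiv (tensorProdDartEquiv G₁ G₂) _ _ fun d => ?_
  rw [← zmodTwoSign_add, add_add_add_comm]
  rfl

variable [DecidableEq V₁] [DecidableEq V₂]

lemma edgeCount_tensorProd_eq_of_edgeCount_eq (hf : edgeCount G₁ f 0 = edgeCount G₁ f 1) :
    edgeCount (tensorProd G₁ G₂) (fun p => f p.1 + g p.2) 0
      = edgeCount (tensorProd G₁ G₂) (fun p => f p.1 + g p.2) 1 := by
  have h := (tensorProd G₁ G₂).two_mul_edgeCount_sub_edgeCount fun p => f p.1 + g p.2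
  rw [sum_darts_tensorProd_zmodTwoSign, ← G₁.two_mul_edgeCount_sub_edgeCount, hf] at h
  simp only [sub_self, mul_zero, zero_mul] at h
  omega

end TensorProd

theorem tensor_product_induced_labeling_cordial_general
    {V₁ V₂ : Type*} [Fintype V₁] [Fintype V₂] [DecidableEq V₁] [DecidableEq V₂]
    (G₁ : SimpleGraph V₁) (G₂ : SimpleGraph V₂)
    [DecidableRel G₁.Adj] [DecidableRel G₂.Adj]
    (heven : Even G₁.edgeFinset.card)
    (f : V₁ → ZMod 2) (g : V₂ → ZMod 2)
    (hf : Cordial G₁ f) (hg : Cordial G₂ g) :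
    Cordial (tensorProd G₁ G₂) (fun p => f p.1 + g p.2) ∧
    edgeCount (tensorProd G₁ G₂) (fun p => f p.1 + g p.2) 0
      = edgeCount (tensorProd G₁ G₂) (fun p => f p.1 + g p.2) 1 := by
  have hedge := edgeCount_tensorProd_eq_of_edgeCount_eq G₁ G₂ f g (hf.edgeCount_eq_of_even heven)
  exact ⟨⟨hf.1.add_prod hg.1, by simp [hedge]⟩, hedge⟩

theorem tensor_product_induced_labeling_cordial
    {V₁ V₂ : Type*} [Fintype V₁] [Fintype V₂] [DecidableEq V₁] [DecidableEq V₂]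
    (G₁ : SimpleGraph V₁) (G₂ : SimpleGraph V₂)
    [DecidableRel G₁.Adj] [DecidableRel G₂.Adj]
    (hconn : G₁.Connected) (hbip : G₁.Colorable 2)
    (heven : Even G₁.edgeFinset.card)
    (f : V₁ → ZMod 2) (g : V₂ → ZMod 2)
    (hf : Cordial G₁ f) (hg : Cordial G₂ g) :
    Cordial (tensorProd G₁ G₂) (fun p => f p.1 + g p.2) ∧
    edgeCount (tensorProd G₁ G₂) (fun p => f p.1 + g p.2) 0
      = edgeCount (tensorProd G₁ G₂) (fun p => f p.1 + g p.2) 1 :=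
  tensor_product_induced_labeling_cordial_general G₁ G₂ heven f g hf hg
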